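/- arXiv:1607.05604 — 2 statements merged into one kernel-verified Lean document; each statement's English description precedes it below -/
import Mathlib

section
/- Let δ₁ ∈ (0,1) and define the parabola p(t) = δ₁ − (√(1−δ₁²)/δ₁)·t + (1/(4δ₁³))·t². Then: (1) for all t ∈ ℝ, 1 + p'(t)² − p(t)p''(t) = p(t)/(2δ₁³); (2) p attains its minimum at t_min = 2δ₁²√(1−δ₁²) with minimum value p(t_min) = δ₁³ > 0; and consequently (3) 1 + p'(t)² − p(t)p''(t) ≥ 1/2 for all t ∈ ℝ. -/
/-!
Writing `p(t) = a + b t + c t²`, one has `P[p] = 1 + (b² - 4ac) + 2c·p`. For this parabola the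
coefficients are tuned so that `b² - 4ac = -1`, whence `P[p] = 2c·p = p / (2δ₁³)`, and the vertex
value `-(b² - 4ac)/(4c) = 1/(4c) = δ₁³` is positive, so `P[p] ≥ 2c·δ₁³ = 1/2`.
-/

/-- The parabola `p(t) = δ₁ - (√(1-δ₁²)/δ₁)t + t²/(4δ₁³)` from the proof of
Proposition 4.2 (Gluing ball and cylinder). -/
noncomputable def parab (δ₁ : ℝ) : ℝ → ℝ :=
  fun t => δ₁ - (Real.sqrt (1 - δ₁ ^ 2) / δ₁) * t + (1 / (4 * δ₁ ^ 3)) * t ^ 2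

/-- The paper's `P[u]`: `P[u] > 0` is 2-convexity of the hypersurface of revolution with profile
`u`. -/
noncomputable def twoConvexityOp (u : ℝ → ℝ) (t : ℝ) : ℝ :=
  1 + deriv u t ^ 2 - u t * deriv (deriv u) t

/-- Coefficients in increasing degree, so the discriminant is Mathlib's `discrim c b a`. -/
def quadratic (a b c t : ℝ) : ℝ := a + b * t + c * t ^ 2

section Quadratic

variable (a b c : ℝ)

theorem hasDerivAt_quadratic (t : ℝ) : HasDerivAt (quadratic a b c) (b + 2 * c * t) t := by
  have h := (((hasDerivAt_id' t).const_mul b).const_add a).add ((hasDerivAt_pow 2 t).const_mul c)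
  exact h.congr_deriv (by simp only [mul_one, Nat.cast_ofNat, Nat.add_one_sub_one, pow_one]; ring)

theorem deriv_quadratic : deriv (quadratic a b c) = fun t => b + 2 * c * t :=
  funext fun t => (hasDerivAt_quadratic a b c t).deriv

theorem deriv_deriv_quadratic (t : ℝ) : deriv (deriv (quadratic a b c)) t = 2 * c := by
  rw [deriv_quadratic]
  exact (((hasDerivAt_id t).const_mul (2 * c)).const_add b).deriv.trans (mul_one _)

theorem twoConvexityOp_quadratic (t : ℝ) :
    twoConvexityOp (quadratic a b c) t = 1 + discrim c b a + 2 * c * quadratic a b c t := by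
  rw [twoConvexityOp, deriv_deriv_quadratic, deriv_quadratic, discrim, quadratic]
  ring

variable {c}

theorem quadratic_eq_vertex_form (hc : c ≠ 0) (t : ℝ) :
    quadratic a b c t = c * (t - -b / (2 * c)) ^ 2 - discrim c b a / (4 * c) := by
  rw [quadratic, discrim]
  field_simp
  ring

theorem quadratic_vertex (hc : c ≠ 0) :
    quadratic a b c (-b / (2 * c)) = -discrim c b a / (4 * c) := by
  rw [quadratic_eq_vertex_form a b hc]
  ring

theorem quadratic_vertex_le (hc : 0 < c) (t : ℝ) :
    quadratic a b c (-b / (2 * c)) ≤ quadratic a b c t := by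
  rw [quadratic_vertex a b hc.ne', quadratic_eq_vertex_form a b hc.ne' t, neg_div]
  have : 0 ≤ c * (t - -b / (2 * c)) ^ 2 := by positivity
  linarith

end Quadratic

theorem parab_eq_quadratic (δ₁ : ℝ) :
    parab δ₁ = quadratic δ₁ (-(Real.sqrt (1 - δ₁ ^ 2) / δ₁)) (1 / (4 * δ₁ ^ 3)) := by
  funext t
  rw [parab, quadratic]
  ring

section Parabola

variable {δ₁ : ℝ}

theorem discrim_parab (h₀ : 0 < δ₁) (h₁ : δ₁ < 1) :
    discrim (1 / (4 * δ₁ ^ 3)) (-(Real.sqrt (1 - δ₁ ^ 2) / δ₁)) δ₁ = -1 := by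
  have hs : Real.sqrt (1 - δ₁ ^ 2) ^ 2 = 1 - δ₁ ^ 2 := Real.sq_sqrt (by nlinarith)
  rw [discrim, neg_sq, div_pow, hs]
  field_simp
  ring

theorem parab_vertex (h₀ : 0 < δ₁) :
    -(-(Real.sqrt (1 - δ₁ ^ 2) / δ₁)) / (2 * (1 / (4 * δ₁ ^ 3)))
      = 2 * δ₁ ^ 2 * Real.sqrt (1 - δ₁ ^ 2) := by
  field_simp
  ring

theorem twoConvexityOp_parab (h₀ : 0 < δ₁) (h₁ : δ₁ < 1) (t : ℝ) :
    twoConvexityOp (parab δ₁) t = parab δ₁ t / (2 * δ₁ ^ 3) := by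
  rw [parab_eq_quadratic, twoConvexityOp_quadratic, discrim_parab h₀ h₁]
  ring

theorem parab_min_value (h₀ : 0 < δ₁) (h₁ : δ₁ < 1) :
    parab δ₁ (2 * δ₁ ^ 2 * Real.sqrt (1 - δ₁ ^ 2)) = δ₁ ^ 3 := by
  rw [← parab_vertex h₀, parab_eq_quadratic, quadratic_vertex _ _ (by positivity),
    discrim_parab h₀ h₁]
  field_simp

theorem parab_min_le (h₀ : 0 < δ₁) (t : ℝ) :
    parab δ₁ (2 * δ₁ ^ 2 * Real.sqrt (1 - δ₁ ^ 2)) ≤ parab δ₁ t := by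
  rw [← parab_vertex h₀, parab_eq_quadratic]
  exact quadratic_vertex_le _ _ (by positivity) t

end Parabola

/-- The computation in the proof of Proposition 4.2: `P[p] = p/(2δ₁³)`, the minimum of `p`
is `δ₁³ > 0`, attained at `t_min = 2δ₁²√(1-δ₁²)`, and consequently `P[p] ≥ 1/2`. -/
theorem parabola_two_convexity (δ₁ : ℝ) (hδ₁ : δ₁ ∈ Set.Ioo (0 : ℝ) 1) :
    (∀ t : ℝ, 1 + (deriv (parab δ₁) t) ^ 2 - parab δ₁ t * deriv (deriv (parab δ₁)) t
      = parab δ₁ t / (2 * δ₁ ^ 3)) ∧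
    (∀ t : ℝ, parab δ₁ (2 * δ₁ ^ 2 * Real.sqrt (1 - δ₁ ^ 2)) ≤ parab δ₁ t) ∧
    parab δ₁ (2 * δ₁ ^ 2 * Real.sqrt (1 - δ₁ ^ 2)) = δ₁ ^ 3 ∧
    0 < δ₁ ^ 3 ∧
    (∀ t : ℝ, 1 / 2 ≤ 1 + (deriv (parab δ₁) t) ^ 2
      - parab δ₁ t * deriv (deriv (parab δ₁)) t) := by
  obtain ⟨h₀, h₁⟩ := hδ₁
  have hcube : 0 < δ₁ ^ 3 := by positivity
  refine ⟨twoConvexityOp_parab h₀ h₁, parab_min_le h₀, parab_min_value h₀ h₁, hcube, fun t => ?_⟩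
  calc (1 : ℝ) / 2 = δ₁ ^ 3 / (2 * δ₁ ^ 3) := by field_simp
    _ ≤ parab δ₁ t / (2 * δ₁ ^ 3) := by
      gcongr
      exact parab_min_value h₀ h₁ ▸ parab_min_le h₀ t
    _ = twoConvexityOp (parab δ₁) t := (twoConvexityOp_parab h₀ h₁ t).symm
end

section
/- Let u : ℝ → ℝ be a C³ function, t* ∈ ℝ, ε > 0, and let M := sup_{t ∈ [t*−ε, t*]} |u'''(t)|. Let u₂ be the second-order Taylor polynomial of u at t*, and let χ : ℝ → [0,1] be a smooth function with χ(s) = 0 for s ≤ 0, χ(s) = 1 for s ≥ 1, |χ'| ≤ 10 and |χ''| ≤ 100. Define v(t) := (1 − χ((t − t* + ε)/ε))·u(t) + χ((t − t* + ε)/ε)·u₂(t). Then for i = 0, 1, 2 and all t ∈ [t*−ε, t*], |(v−u)^{(i)}(t)| ≤ 1000·M·ε^{3−i}. -/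
/-- The key estimate in the proof of Proposition 3.4 (Trimming the remainder):
transitioning from `u` to its second-order Taylor polynomial `u₂` at `t*` over an interval
of length `ε` changes `u`, `u'`, `u''` only by `1000·M·ε^{3-i}`, where `M` is the sup of
`|u'''|` on `[t*-ε, t*]`. -/
theorem trimming_transition_estimate (u : ℝ → ℝ) (hu : ContDiff ℝ 3 u)
    (tstar ε : ℝ) (hε : 0 < ε)
    (χ : ℝ → ℝ) (hχ : ContDiff ℝ (⊤ : ℕ∞) χ) (hχr : ∀ s : ℝ, χ s ∈ Set.Icc (0 : ℝ) 1)
    (hχ0 : ∀ s ≤ (0 : ℝ), χ s = 0) (hχ1 : ∀ s ≥ (1 : ℝ), χ s = 1)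
    (hχ' : ∀ s : ℝ, |deriv χ s| ≤ 10) (hχ'' : ∀ s : ℝ, |deriv (deriv χ) s| ≤ 100) :
    ∀ i ≤ 2, ∀ t ∈ Set.Icc (tstar - ε) tstar,
      |iteratedDeriv i (fun s =>
          ((1 - χ ((s - tstar + ε) / ε)) * u s
            + χ ((s - tstar + ε) / ε) * (u tstar + deriv u tstar * (s - tstar)
              + (1 / 2) * iteratedDeriv 2 u tstar * (s - tstar) ^ 2)) - u s) t|
        ≤ 1000 * sSup ((fun s => |iteratedDeriv 3 u s|) '' Set.Icc (tstar - ε) tstar)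
          * ε ^ (3 - i) := by
  -- notation
  set I : Set ℝ := Set.Icc (tstar - ε) tstar with hI
  have hIne : I.Nonempty := Set.nonempty_Icc.2 (by linarith)
  have hIconv : Convex ℝ I := convex_Icc _ _
  have htsI : tstar ∈ I := ⟨by linarith, le_refl _⟩
  -- smoothness facts
  have hdu : Differentiable ℝ u := hu.differentiable (by norm_num)
  have h2 : ContDiff ℝ 2 (deriv u) := by
    have := (contDiff_succ_iff_deriv.mp (show ContDiff ℝ (2+1) u from hu)).2.2
    simpa using this
  have hdu1 : Differentiable ℝ (deriv u) := h2.differentiable (by norm_num)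
  have h1 : ContDiff ℝ 1 (deriv (deriv u)) := by
    have := (contDiff_succ_iff_deriv.mp (show ContDiff ℝ (1+1) (deriv u) from h2)).2.2
    simpa using this
  have hdu2 : Differentiable ℝ (deriv (deriv u)) := h1.differentiable (by norm_num)
  have hcu3 : Continuous (deriv (deriv (deriv u))) := h1.continuous_deriv (le_refl _)
  have h3eq : iteratedDeriv 3 u = deriv (deriv (deriv u)) := by
    simp [iteratedDeriv_succ, iteratedDeriv_zero]
  have h2eq : iteratedDeriv 2 u = deriv (deriv u) := by
    simp [iteratedDeriv_succ, iteratedDeriv_zero]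
  -- the sup
  set M : ℝ := sSup ((fun s => |iteratedDeriv 3 u s|) '' I) with hM
  have hbdd : BddAbove ((fun s => |iteratedDeriv 3 u s|) '' I) := by
    apply (isCompact_Icc.image (by rw [h3eq]; exact hcu3.abs)).bddAbove
  have hMb : ∀ t ∈ I, |deriv (deriv (deriv u)) t| ≤ M := by
    intro t ht
    rw [← h3eq]
    exact le_csSup hbdd ⟨t, ht, rfl⟩
  have hM0 : 0 ≤ M := le_trans (abs_nonneg _) (hMb tstar htsI)
  -- Taylor polynomial and remainder
  set c : ℝ := u tstar
  set b : ℝ := deriv u tstar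
  set a : ℝ := deriv (deriv u) tstar with ha
  set p : ℝ → ℝ := fun s => c + b * (s - tstar) + (1/2) * a * (s - tstar)^2 with hp
  set w : ℝ → ℝ := fun s => p s - u s with hwdef
  set w1 : ℝ → ℝ := fun s => (b + a * (s - tstar)) - deriv u s with hw1def
  set w2 : ℝ → ℝ := fun s => a - deriv (deriv u) s with hw2def
  have hsub : ∀ s : ℝ, HasDerivAt (fun x : ℝ => x - tstar) 1 s := fun s =>
    (hasDerivAt_id s).sub_const _
  have hpd : ∀ s, HasDerivAt p (b + a * (s - tstar)) s := by
    intro s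
    have h := (((hsub s).const_mul b).const_add c).add
      (((hsub s).pow 2).const_mul ((1/2) * a))
    exact h.congr_deriv (by simp only [Nat.cast_ofNat, show (2-1:ℕ)=1 from rfl, pow_one]; ring)
  have hwd : ∀ s, HasDerivAt w (w1 s) s := fun s => (hpd s).sub (hdu s).hasDerivAt
  have hw1d : ∀ s, HasDerivAt w1 (w2 s) s := by
    intro s
    have h := (((hsub s).const_mul a).const_add b).sub (hdu1 s).hasDerivAt
    exact h.congr_deriv (by simp [hw2def])
  have hw2d : ∀ s, HasDerivAt w2 (-(deriv (deriv (deriv u)) s)) s := by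
    intro s
    have h := (hasDerivAt_const s a).sub (hdu2 s).hasDerivAt
    rw [zero_sub] at h
    exact h
  -- MVT bounds
  have mvt : ∀ (f f' : ℝ → ℝ) (C : ℝ), (∀ s, HasDerivAt f (f' s) s) →
      (∀ s ∈ I, |f' s| ≤ C) → f tstar = 0 → ∀ t ∈ I, |f t| ≤ C * ε := by
    intro f f' C hf hC hf0 t ht
    have := hIconv.norm_image_sub_le_of_norm_hasDerivWithin_le
      (fun x (_ : x ∈ I) => (hf x).hasDerivWithinAt)
      (fun x hx => by simpa [Real.norm_eq_abs] using hC x hx) htsI ht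
    rw [hf0, sub_zero] at this
    calc |f t| = ‖f t‖ := rfl
      _ ≤ C * ‖t - tstar‖ := this
      _ ≤ C * ε := by
        apply mul_le_mul_of_nonneg_left _ (le_trans (abs_nonneg (f' tstar)) (hC tstar htsI))
        rw [Real.norm_eq_abs, abs_le]
        constructor <;> linarith [ht.1, ht.2]
  have hw2b : ∀ t ∈ I, |w2 t| ≤ M * ε := by
    apply mvt w2 _ M hw2d (fun s hs => by simpa using hMb s hs)
    simp [hw2def, ha]
  have hw1b : ∀ t ∈ I, |w1 t| ≤ M * ε * ε :=
    mvt w1 w2 (M * ε) hw1d hw2b (by simp [hw1def, b])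
  have hwb : ∀ t ∈ I, |w t| ≤ M * ε * ε * ε :=
    mvt w w1 (M * ε * ε) hwd hw1b (by simp [hwdef, hp, c])
  -- cutoff function
  set τ : ℝ → ℝ := fun s => (s - tstar + ε) / ε with hτdef
  have hτd : ∀ s, HasDerivAt τ (1 / ε) s := fun s =>
    (((hasDerivAt_id s).sub_const tstar).add_const ε).div_const ε
  have hchiT : ContDiff ℝ (⊤ : ℕ∞) χ := hχ.of_le (by simp)
  have hχd : Differentiable ℝ χ := hchiT.differentiable (by simp)
  have hχ'c : ContDiff ℝ (⊤ : ℕ∞) (deriv χ) := (contDiff_infty_iff_deriv.mp hchiT).2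
  have hχ'd : Differentiable ℝ (deriv χ) := hχ'c.differentiable (by simp)
  set g : ℝ → ℝ := fun s => χ (τ s) with hgdef
  set g1 : ℝ → ℝ := fun s => deriv χ (τ s) * (1 / ε) with hg1def
  set g2 : ℝ → ℝ := fun s => deriv (deriv χ) (τ s) * (1 / ε) * (1 / ε) with hg2def
  have hgd : ∀ s, HasDerivAt g (g1 s) s := fun s => by
    simpa [hgdef, hg1def, Function.comp_def] using ((hχd (τ s)).hasDerivAt.comp s (hτd s))
  have hg1d : ∀ s, HasDerivAt g1 (g2 s) s := fun s => by
    simpa [hg1def, hg2def, Function.comp] using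
      (((hχ'd (τ s)).hasDerivAt.comp s (hτd s)).mul_const (1 / ε))
  have hgb : ∀ s, |g s| ≤ 1 := fun s =>
    abs_le.mpr ⟨by linarith [(hχr (τ s)).1], (hχr (τ s)).2⟩
  have hεinv : |(1:ℝ)/ε| = 1/ε := abs_of_pos (by positivity)
  have hg1b : ∀ s, |g1 s| ≤ 10 * (1/ε) := fun s => by
    rw [hg1def]
    calc |deriv χ (τ s) * (1/ε)| = |deriv χ (τ s)| * |(1:ℝ)/ε| := abs_mul _ _
      _ ≤ 10 * (1/ε) := by
          rw [hεinv]
          exact mul_le_mul_of_nonneg_right (hχ' _) (by positivity)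
  have hg2b : ∀ s, |g2 s| ≤ 100 * (1/ε) * (1/ε) := fun s => by
    rw [hg2def]
    calc |deriv (deriv χ) (τ s) * (1/ε) * (1/ε)|
        = |deriv (deriv χ) (τ s)| * |(1:ℝ)/ε| * |(1:ℝ)/ε| := by rw [abs_mul, abs_mul]
      _ ≤ 100 * (1/ε) * (1/ε) := by
          rw [hεinv]
          have h1 : (0:ℝ) ≤ 1/ε := by positivity
          exact mul_le_mul_of_nonneg_right
            (mul_le_mul_of_nonneg_right (hχ'' (τ s)) h1) h1
  -- the key rewriting
  have key : (fun s =>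
          ((1 - χ ((s - tstar + ε) / ε)) * u s
            + χ ((s - tstar + ε) / ε) * (c + b * (s - tstar)
              + (1 / 2) * iteratedDeriv 2 u tstar * (s - tstar) ^ 2)) - u s)
      = fun s => g s * w s := by
    funext s
    simp only [hgdef, hwdef, hp, hτdef, h2eq, ha]
    ring
  -- derivatives of g * w
  have hFd : ∀ s, HasDerivAt (fun x => g x * w x) (g1 s * w s + g s * w1 s) s :=
    fun s => (hgd s).mul (hwd s)
  have hDeq : deriv (fun x => g x * w x) = fun s => g1 s * w s + g s * w1 s :=
    funext fun s => (hFd s).deriv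
  have hF2d : ∀ s, HasDerivAt (fun x => g1 x * w x + g x * w1 x)
      ((g2 s * w s + g1 s * w1 s) + (g1 s * w1 s + g s * w2 s)) s :=
    fun s => ((hg1d s).mul (hwd s)).add ((hgd s).mul (hw1d s))
  -- conclusion
  intro i hi t ht
  have hMe : 0 ≤ M * ε := mul_nonneg hM0 hε.le
  have hMe2 : 0 ≤ M * ε * ε := mul_nonneg hMe hε.le
  have hMe3 : 0 ≤ M * ε * ε * ε := mul_nonneg hMe2 hε.le
  rw [key]
  interval_cases i
  · rw [iteratedDeriv_zero]
    have h1 := hgb t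
    have h2 := hwb t ht
    have : |g t * w t| ≤ 1 * (M * ε * ε * ε) := by
      rw [abs_mul]
      exact mul_le_mul h1 h2 (abs_nonneg _) zero_le_one
    calc |g t * w t| ≤ 1 * (M * ε * ε * ε) := this
      _ ≤ 1000 * M * ε ^ (3 - 0) := by
          have : ε ^ (3 - 0 : ℕ) = ε * ε * ε := by norm_num; ring
          rw [this]; nlinarith [hMe3]
  · rw [iteratedDeriv_one, hDeq]
    have h1 : |g1 t * w t| ≤ (10 * (1/ε)) * (M * ε * ε * ε) := by
      rw [abs_mul]
      exact mul_le_mul (hg1b t) (hwb t ht) (abs_nonneg _) (by positivity)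
    have h2 : |g t * w1 t| ≤ 1 * (M * ε * ε) := by
      rw [abs_mul]
      exact mul_le_mul (hgb t) (hw1b t ht) (abs_nonneg _) zero_le_one
    have e1 : (10 * (1/ε)) * (M * ε * ε * ε) = 10 * M * ε * ε := by
      field_simp
    calc |g1 t * w t + g t * w1 t| ≤ |g1 t * w t| + |g t * w1 t| := abs_add_le _ _
      _ ≤ (10 * (1/ε)) * (M * ε * ε * ε) + 1 * (M * ε * ε) := add_le_add h1 h2
      _ ≤ 1000 * M * ε ^ (3 - 1) := by
          rw [e1]
          have : ε ^ (3 - 1 : ℕ) = ε * ε := by norm_num; ring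
          rw [this]; nlinarith [hMe2]
  · have h2eq' : iteratedDeriv 2 (fun x => g x * w x) t
        = deriv (deriv (fun x => g x * w x)) t := by
      rw [iteratedDeriv_succ, iteratedDeriv_one]
    rw [h2eq', hDeq]
    have hdval : deriv (fun s => g1 s * w s + g s * w1 s) t
        = (g2 t * w t + g1 t * w1 t) + (g1 t * w1 t + g t * w2 t) := (hF2d t).deriv
    rw [hdval]
    have h1 : |g2 t * w t| ≤ (100 * (1/ε) * (1/ε)) * (M * ε * ε * ε) := by
      rw [abs_mul]
      exact mul_le_mul (hg2b t) (hwb t ht) (abs_nonneg _) (by positivity)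
    have h2 : |g1 t * w1 t| ≤ (10 * (1/ε)) * (M * ε * ε) := by
      rw [abs_mul]
      exact mul_le_mul (hg1b t) (hw1b t ht) (abs_nonneg _) (by positivity)
    have h3 : |g t * w2 t| ≤ 1 * (M * ε) := by
      rw [abs_mul]
      exact mul_le_mul (hgb t) (hw2b t ht) (abs_nonneg _) zero_le_one
    have e1 : (100 * (1/ε) * (1/ε)) * (M * ε * ε * ε) = 100 * M * ε := by
      field_simp
    have e2 : (10 * (1/ε)) * (M * ε * ε) = 10 * M * ε := by
      field_simp
    calc |(g2 t * w t + g1 t * w1 t) + (g1 t * w1 t + g t * w2 t)|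
        ≤ |g2 t * w t| + |g1 t * w1 t| + (|g1 t * w1 t| + |g t * w2 t|) := by
          calc _ ≤ |g2 t * w t + g1 t * w1 t| + |g1 t * w1 t + g t * w2 t| := abs_add_le _ _
            _ ≤ _ := add_le_add (abs_add_le _ _) (abs_add_le _ _)
      _ ≤ ((100 * (1/ε) * (1/ε)) * (M * ε * ε * ε) + (10 * (1/ε)) * (M * ε * ε))
          + ((10 * (1/ε)) * (M * ε * ε) + 1 * (M * ε)) :=
          add_le_add (add_le_add h1 h2) (add_le_add h2 h3)
      _ ≤ 1000 * M * ε ^ (3 - 2) := by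
          rw [e1, e2]
          have : ε ^ (3 - 2 : ℕ) = ε := by norm_num
          rw [this]; nlinarith [hMe]
end
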